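/- arXiv:2406.05996 — 8 statements merged into one kernel-verified Lean document; each statement's English description precedes it below -/
import Mathlib

section
/- Let 𝒫 = {(a₂₁, tr A, det A) ∈ ℂ³ : A = [aᵢⱼ] is a 2×2 complex matrix with operator norm ‖A‖ < 1} (the pentablock). Suppose (s,p) ∈ ℂ² satisfies s = conj(s)·p, |p| = 1 and |s| ≤ 2. Then for every a ∈ ℂ, the point (a, s, p) lies in the closure of 𝒫 in ℂ³ if and only if |a|² ≤ 1 − |s|²/4. -/
/-- The pentablock: the image of the open unit ball (operator norm) of `2 × 2` complex
matrices under `A ↦ (a₂₁, tr A, det A)`. -/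
noncomputable def pentablock : Set (ℂ × ℂ × ℂ) :=
  {x | ∃ A : Matrix (Fin 2) (Fin 2) ℂ,
    ‖Matrix.toEuclideanCLM (𝕜 := ℂ) (n := Fin 2) A‖ < 1 ∧
    x = (A 1 0, Matrix.trace A, Matrix.det A)}

/-!
A contraction `A` has columns and rows of length at most `1`, so `|a₂₁|² + |a₁₁|² ≤ 1` and
`|a₂₁|² + |a₂₂|² ≤ 1`; with `|tr A|² ≤ 2 (|a₁₁|² + |a₂₂|²)` this gives `|a₂₁|² ≤ 1 - |tr A|² / 4`.
Since the closed unit ball is compact and is the closure of the open one, the closure of the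
pentablock is the image of all contractions, so the condition is necessary.

Conversely, `(s, p) ∈ bΓ` means `s = u + v`, `p = u v` with `|u| = |v| = 1` (write `p = q²`,
`s = 2 q cos θ` and take `u, v = q e^{± iθ}`), and then `|u - v|² = 4 - |s|²`. Conjugating
`diag (u, v)` by the unitary `[[x, -ȳ], [y, x̄]]` gives a unitary matrix with trace `s`,
determinant `p` and lower left entry `x̄ y (u - v)`, and `x̄ y` ranges over the disc of radius `1/2`.
-/

open Complex Matrix Metric
open scoped Matrix.Norms.L2Operator ComplexConjugate

namespace Matrix

variable {𝕜 m n : Type*} [RCLike 𝕜] [Fintype m] [Fintype n] [DecidableEq n]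

lemma sum_norm_sq_col_le_l2_opNorm_sq (A : Matrix m n 𝕜) (j : n) :
    ∑ i, ‖A i j‖ ^ 2 ≤ ‖A‖ ^ 2 := by
  have h := A.l2_opNorm_mulVec (PiLp.single 2 j 1)
  rw [PiLp.norm_single, norm_one, mul_one, EuclideanSpace.norm_eq] at h
  simpa [mulVec_single] using (Real.sqrt_le_iff.mp h).2

lemma sum_norm_sq_row_le_l2_opNorm_sq [DecidableEq m] (A : Matrix m n 𝕜) (i : m) :
    ∑ j, ‖A i j‖ ^ 2 ≤ ‖A‖ ^ 2 := by
  simpa [l2_opNorm_conjTranspose] using Aᴴ.sum_norm_sq_col_le_l2_opNorm_sq i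

lemma diagonal_mem_unitaryGroup {α : Type*} [CommRing α] [StarRing α] {d : n → α}
    (hd : ∀ i, d i ∈ unitary α) : diagonal d ∈ unitaryGroup n α := by
  rw [mem_unitaryGroup_iff', star_eq_conjTranspose, diagonal_conjTranspose, diagonal_mul_diagonal,
    ← diagonal_one]
  exact congrArg diagonal (funext fun i ↦ Unitary.star_mul_self_of_mem (hd i))

lemma mem_unitaryGroup_of_norm_sq_add_norm_sq_eq_one {x y : ℂ} (h : ‖x‖ ^ 2 + ‖y‖ ^ 2 = 1) :
    !![x, -conj y; y, conj x] ∈ unitaryGroup (Fin 2) ℂ := by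
  have h' : conj x * x + conj y * y = 1 := by
    rw [conj_mul', conj_mul']
    exact_mod_cast h
  rw [mem_unitaryGroup_iff']
  ext i j
  fin_cases i <;> fin_cases j <;>
    simp only [Fin.zero_eta, Fin.mk_one, Fin.isValue, mul_apply, Fin.sum_univ_two, star_apply,
      of_apply, cons_val', cons_val_zero, cons_val_one, cons_val_fin_one, RCLike.star_def, map_neg,
      conj_conj, one_apply_eq, one_apply_ne, ne_eq, zero_ne_one, one_ne_zero, not_false_eq_true]
  · exact h'
  · ring
  · ring
  · linear_combination h'

end Matrix

lemma norm_sub_sq_eq_four_sub_norm_add_sq {E : Type*} [NormedAddCommGroup E]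
    [InnerProductSpace ℝ E] {u v : E} (hu : ‖u‖ = 1) (hv : ‖v‖ = 1) :
    ‖u - v‖ ^ 2 = 4 - ‖u + v‖ ^ 2 := by
  have := parallelogram_law_with_norm ℝ u v
  rw [hu, hv] at this
  linarith

namespace Complex

lemma exists_eq_mul_ofReal_of_eq_conj_mul_sq {s q : ℂ} (hq : ‖q‖ = 1)
    (h : s = conj s * q ^ 2) : ∃ t : ℝ, s = q * t := by
  have hqq : q * conj q = 1 := by
    rw [mul_conj', hq]
    simp
  have hreal : conj (s * conj q) = s * conj q := by
    rw [map_mul, conj_conj]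
    calc conj s * q = conj s * q ^ 2 * conj q := by linear_combination (-(conj s * q)) * hqq
      _ = s * conj q := by rw [← h]
  refine ⟨(s * conj q).re, ?_⟩
  rw [conj_eq_iff_re.mp hreal]
  linear_combination (-s) * hqq

lemma exists_norm_eq_one_add_eq_mul_eq {s p : ℂ} (h₁ : s = conj s * p) (h₂ : ‖p‖ = 1)
    (h₃ : ‖s‖ ≤ 2) : ∃ u v : ℂ, ‖u‖ = 1 ∧ ‖v‖ = 1 ∧ u + v = s ∧ u * v = p := by
  obtain ⟨q, hq, hqp⟩ : ∃ q : ℂ, ‖q‖ = 1 ∧ q ^ 2 = p := by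
    refine ⟨exp (↑(arg p / 2) * I), norm_exp_ofReal_mul_I _, ?_⟩
    rw [← exp_nat_mul, show ((2 : ℕ) : ℂ) * (↑(arg p / 2) * I) = arg p * I by push_cast; ring]
    simpa [h₂] using norm_mul_exp_arg_mul_I p
  obtain ⟨t, rfl⟩ := exists_eq_mul_ofReal_of_eq_conj_mul_sq hq (hqp ▸ h₁)
  have ht : |t| ≤ 2 := by simpa [hq] using h₃
  set θ := Real.arccos (t / 2)
  have hcos : Real.cos θ = t / 2 :=
    Real.cos_arccos (by linarith [neg_abs_le t]) (by linarith [le_abs_self t])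
  refine ⟨q * exp (θ * I), q * exp (-θ * I), by simp [hq], by simp [hq, norm_exp], ?_, ?_⟩
  · rw [← mul_add, ← two_cos, ← ofReal_cos, hcos]
    push_cast
    ring
  · rw [mul_mul_mul_comm, ← exp_add, neg_mul, add_neg_cancel, exp_zero, mul_one, ← sq, hqp]

lemma exists_norm_sq_add_norm_sq_eq_one_conj_mul_eq {z : ℂ} (hz : ‖z‖ ≤ 1 / 2) :
    ∃ x y : ℂ, ‖x‖ ^ 2 + ‖y‖ ^ 2 = 1 ∧ conj x * y = z := by
  set φ := Real.arcsin (2 * ‖z‖) / 2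
  have hsc : Real.sin φ * Real.cos φ = ‖z‖ := by
    have := Real.sin_two_mul φ
    rw [show 2 * φ = Real.arcsin (2 * ‖z‖) by ring,
      Real.sin_arcsin (by linarith [norm_nonneg z]) (by linarith)] at this
    linarith
  refine ⟨Real.cos φ, Real.sin φ * exp (arg z * I), ?_, ?_⟩
  · simp only [norm_mul, norm_real, norm_exp_ofReal_mul_I, Real.norm_eq_abs, sq_abs, mul_one,
      Real.cos_sq_add_sin_sq]
  · rw [conj_ofReal, ← mul_assoc, ← ofReal_mul, mul_comm (Real.cos φ), hsc]
    exact norm_mul_exp_arg_mul_I z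

end Complex

lemma exists_mem_unitaryGroup_apply_one_zero_eq {u v a : ℂ} (hu : ‖u‖ = 1) (hv : ‖v‖ = 1)
    (ha : 2 * ‖a‖ ≤ ‖u - v‖) :
    ∃ A ∈ unitaryGroup (Fin 2) ℂ, A 1 0 = a ∧ A.trace = u + v ∧ A.det = u * v := by
  obtain ⟨z, hz, rfl⟩ : ∃ z : ℂ, ‖z‖ ≤ 1 / 2 ∧ z * (u - v) = a := by
    rcases eq_or_ne (u - v) 0 with huv | huv
    · refine ⟨0, by norm_num, ?_⟩
      rw [huv, norm_zero] at ha
      rw [zero_mul, eq_comm, ← norm_le_zero_iff]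
      linarith
    · refine ⟨a / (u - v), ?_, div_mul_cancel₀ a huv⟩
      rw [norm_div, div_le_iff₀ (norm_pos_iff.mpr huv)]
      linarith
  obtain ⟨x, y, hxy, rfl⟩ := exists_norm_sq_add_norm_sq_eq_one_conj_mul_eq hz
  set U := !![x, -conj y; y, conj x]
  have hU : U ∈ unitaryGroup (Fin 2) ℂ := mem_unitaryGroup_of_norm_sq_add_norm_sq_eq_one hxy
  have hUU : star U * U = 1 := mem_unitaryGroup_iff'.mp hU
  have hD : diagonal ![u, v] ∈ unitaryGroup (Fin 2) ℂ := by
    refine diagonal_mem_unitaryGroup fun i ↦ ?_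
    fin_cases i <;> simp [Unitary.mem_iff_star_mul_self, conj_mul', hu, hv]
  refine ⟨U * diagonal ![u, v] * star U, mul_mem (mul_mem hU hD) (Unitary.star_mem hU), ?_, ?_, ?_⟩
  · simp only [U, cons_mul, empty_mul, Equiv.symm_apply_apply, Fin.isValue, mul_apply, of_apply,
      cons_val', vecMul, dotProduct, Fin.sum_univ_two, cons_val_zero, cons_val_one,
      cons_val_fin_one, star_apply, RCLike.star_def, diagonal_apply_eq, diagonal_apply_ne, ne_eq,
      one_ne_zero, zero_ne_one, not_false_eq_true, map_neg, conj_conj, mul_zero, add_zero, zero_add]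
    ring
  · rw [trace_mul_comm, ← mul_assoc, hUU, one_mul, trace_diagonal]
    simp
  · rw [det_mul_comm, ← mul_assoc, hUU, one_mul, det_diagonal]
    simp

lemma norm_sq_apply_one_zero_le {A : Matrix (Fin 2) (Fin 2) ℂ} (hA : ‖A‖ ≤ 1) :
    ‖A 1 0‖ ^ 2 ≤ 1 - ‖A.trace‖ ^ 2 / 4 := by
  have hA2 : ‖A‖ ^ 2 ≤ 1 := pow_le_one₀ (norm_nonneg A) hA
  have hcol := A.sum_norm_sq_col_le_l2_opNorm_sq 0
  have hrow := A.sum_norm_sq_row_le_l2_opNorm_sq 1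
  have htr : ‖A.trace‖ ≤ ‖A 0 0‖ + ‖A 1 1‖ := by
    rw [trace_fin_two]
    exact norm_add_le _ _
  simp only [Fin.sum_univ_two] at hcol hrow
  nlinarith [norm_nonneg A.trace, sq_nonneg (‖A 0 0‖ - ‖A 1 1‖)]

noncomputable def pentablockMap (A : Matrix (Fin 2) (Fin 2) ℂ) : ℂ × ℂ × ℂ :=
  (A 1 0, A.trace, A.det)

lemma pentablock_eq_image_ball : pentablock = pentablockMap '' ball 0 1 := by
  ext x
  simp only [pentablock, pentablockMap, Set.mem_ofPred_eq, Set.mem_image, mem_ball_zero_iff,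
    eq_comm (a := x)]
  rfl

lemma closure_pentablock_eq_image_closedBall :
    closure pentablock = pentablockMap '' closedBall 0 1 := by
  have hcont : Continuous pentablockMap := by
    unfold pentablockMap
    fun_prop
  rw [pentablock_eq_image_ball]
  refine subset_antisymm ?_ ?_
  · exact closure_minimal (Set.image_mono ball_subset_closedBall)
      ((isCompact_closedBall 0 1).image hcont).isClosed
  · rw [← closure_ball 0 one_ne_zero]
    exact image_closure_subset_closure_image hcont

/-- If `(s,p)` lies in the distinguished boundary of the symmetrized bidisc
(`s = s̄ p`, `|p| = 1`, `|s| ≤ 2`), then for any `a ∈ ℂ`, the point `(a,s,p)` lies in the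
closure of the pentablock iff `|a|² ≤ 1 - |s|²/4`. -/
theorem statement0 (s p : ℂ) (h₁ : s = (starRingEnd ℂ) s * p)
    (h₂ : ‖p‖ = 1) (h₃ : ‖s‖ ≤ 2) (a : ℂ) :
    (a, s, p) ∈ closure pentablock ↔
      ‖a‖ ^ 2 ≤ 1 - ‖s‖ ^ 2 / 4 := by
  rw [closure_pentablock_eq_image_closedBall]
  constructor
  · rintro ⟨A, hA, hAx⟩
    simp only [pentablockMap, Prod.mk.injEq] at hAx
    obtain ⟨rfl, rfl, -⟩ := hAx
    exact norm_sq_apply_one_zero_le (mem_closedBall_zero_iff.mp hA)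
  · intro ha
    obtain ⟨u, v, hu, hv, rfl, rfl⟩ := exists_norm_eq_one_add_eq_mul_eq h₁ h₂ h₃
    have hsep : 2 * ‖a‖ ≤ ‖u - v‖ := by
      have := norm_sub_sq_eq_four_sub_norm_add_sq hu hv
      nlinarith [norm_nonneg a, norm_nonneg (u - v)]
    obtain ⟨A, hA, h10, htr, hdet⟩ := exists_mem_unitaryGroup_apply_one_zero_eq hu hv hsep
    exact ⟨A, mem_closedBall_zero_iff.mpr (CStarRing.norm_of_mem_unitary hA).le,
      by rw [pentablockMap, h10, htr, hdet]⟩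
end

section
/- Let K be a complex Hilbert space and let (N₁, N₂, N₃) be pairwise commuting normal bounded operators on K with N₃ unitary, N₂ = N₂*N₃, ‖N₂‖ ≤ 2, and N₁*N₁ = I − (1/4)N₂*N₂. Let H ⊆ K be a closed subspace invariant under N₁, N₂ and N₃, and set Vᵢ = Nᵢ|_H ∈ B(H). Then (V₂, V₃) is a Γ-isometry, i.e. V₂V₃ = V₃V₂, V₃*V₃ = I_H, V₂ = V₂*V₃ and ‖V₂‖ ≤ 2, and moreover V₁*V₁ = I_H − (1/4)V₂*V₂. -/
open ContinuousLinearMap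

/-!
Write `ι : H → K` for the inclusion, so that `ι* ι = 1` and `ι Vᵢ = Nᵢ ι`. Then every product
`Vᵢ* Vⱼ = ι* (Nᵢ* Nⱼ) ι` is the compression of the corresponding product of the `Nᵢ`, and
compression is linear and fixes `1`; so each identity among the `Nᵢ* Nⱼ` descends to the `Vᵢ`.
Commutation descends because `ι` is injective, and `‖V₂‖ ≤ ‖N₂‖` because `ι` is isometric.
-/

section Compression

variable {𝕜 E F : Type*} [RCLike 𝕜]
  [NormedAddCommGroup E] [InnerProductSpace 𝕜 E] [CompleteSpace E]
  [NormedAddCommGroup F] [InnerProductSpace 𝕜 F] [CompleteSpace F]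
  {ι : E →L[𝕜] F} (hι : adjoint ι ∘L ι = 1)
  {V W : E →L[𝕜] E} {N M : F →L[𝕜] F}
include hι

theorem eq_of_comp_left_eq_of_adjoint_comp_self {A B : E →L[𝕜] E} (h : ι ∘L A = ι ∘L B) :
    A = B := by
  rw [← id_comp A, ← id_comp B, ← one_def, ← hι, comp_assoc, h, comp_assoc]

theorem adjoint_comp_comp_eq_of_intertwines (hV : ι ∘L V = N ∘L ι) :
    adjoint ι ∘L N ∘L ι = V := by
  rw [← hV, ← comp_assoc, hι, one_def, id_comp]

theorem adjoint_comp_eq_of_intertwines (hV : ι ∘L V = N ∘L ι) (hW : ι ∘L W = M ∘L ι) :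
    adjoint V ∘L W = adjoint ι ∘L (adjoint N ∘L M) ∘L ι := by
  calc adjoint V ∘L W = adjoint V ∘L (adjoint ι ∘L ι) ∘L W := by rw [hι, one_def, id_comp]
    _ = adjoint (ι ∘L V) ∘L (ι ∘L W) := by simp only [adjoint_comp, comp_assoc]
    _ = adjoint ι ∘L (adjoint N ∘L M) ∘L ι := by simp only [hV, hW, adjoint_comp, comp_assoc]

theorem comp_comm_of_intertwines (hV : ι ∘L V = N ∘L ι) (hW : ι ∘L W = M ∘L ι)
    (hNM : N ∘L M = M ∘L N) : V ∘L W = W ∘L V := by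
  refine eq_of_comp_left_eq_of_adjoint_comp_self hι ?_
  calc ι ∘L V ∘L W = (N ∘L M) ∘L ι := by rw [← comp_assoc, hV, comp_assoc, hW, comp_assoc]
    _ = ι ∘L W ∘L V := by rw [hNM, comp_assoc, ← hV, ← comp_assoc, ← hW, comp_assoc]

theorem opNorm_le_of_intertwines (hV : ι ∘L V = N ∘L ι) : ‖V‖ ≤ ‖N‖ := by
  have hnorm : ∀ x, ‖ι x‖ = ‖x‖ := ι.norm_map_iff_adjoint_comp_self.mpr hι
  refine opNorm_le_bound _ (norm_nonneg _) fun x => ?_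
  calc ‖V x‖ = ‖N (ι x)‖ := by rw [← hnorm, ← comp_apply, hV, comp_apply]
    _ ≤ ‖N‖ * ‖ι x‖ := le_opNorm _ _
    _ = ‖N‖ * ‖x‖ := by rw [hnorm]

end Compression

theorem statement3_general {K : Type*} [NormedAddCommGroup K] [InnerProductSpace ℂ K]
    [CompleteSpace K] (N₁ N₂ N₃ : K →L[ℂ] K)
    (h₂₃ : N₂ * N₃ = N₃ * N₂)
    (hu : adjoint N₃ * N₃ = 1 ∧ N₃ * adjoint N₃ = 1)
    (hΓ : N₂ = adjoint N₂ * N₃) (hb : ‖N₂‖ ≤ 2)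
    (hpu : adjoint N₁ * N₁ = 1 - (1/4 : ℂ) • (adjoint N₂ * N₂))
    (H : Submodule ℂ K) [CompleteSpace H]
    (V₁ V₂ V₃ : H →L[ℂ] H)
    (hV : ∀ x : H, (V₁ x : K) = N₁ x ∧ (V₂ x : K) = N₂ x ∧ (V₃ x : K) = N₃ x) :
    V₂ * V₃ = V₃ * V₂ ∧
    adjoint V₃ * V₃ = 1 ∧
    V₂ = adjoint V₂ * V₃ ∧
    ‖V₂‖ ≤ 2 ∧
    adjoint V₁ * V₁ = 1 - (1/4 : ℂ) • (adjoint V₂ * V₂) := by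
  set ι := H.subtypeL
  have hι : adjoint ι ∘L ι = 1 := ι.norm_map_iff_adjoint_comp_self.mp fun _ => rfl
  have hV₁ : ι ∘L V₁ = N₁ ∘L ι := ext fun x => (hV x).1
  have hV₂ : ι ∘L V₂ = N₂ ∘L ι := ext fun x => (hV x).2.1
  have hV₃ : ι ∘L V₃ = N₃ ∘L ι := ext fun x => (hV x).2.2
  refine ⟨comp_comm_of_intertwines hι hV₂ hV₃ h₂₃, ?_, ?_,
    (opNorm_le_of_intertwines hι hV₂).trans hb, ?_⟩
  · calc adjoint V₃ ∘L V₃ = adjoint ι ∘L (adjoint N₃ ∘L N₃) ∘L ι :=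
          adjoint_comp_eq_of_intertwines hι hV₃ hV₃
      _ = 1 := by rw [← mul_def, hu.1, one_def, id_comp, hι]
  · calc V₂ = adjoint ι ∘L N₂ ∘L ι := (adjoint_comp_comp_eq_of_intertwines hι hV₂).symm
      _ = adjoint V₂ ∘L V₃ := by
          rw [adjoint_comp_eq_of_intertwines hι hV₂ hV₃, ← mul_def, ← hΓ]
  · calc adjoint V₁ ∘L V₁ = adjoint ι ∘L (adjoint N₁ ∘L N₁) ∘L ι :=
          adjoint_comp_eq_of_intertwines hι hV₁ hV₁
      _ = adjoint ι ∘L ι - (1/4 : ℂ) • adjoint ι ∘L (adjoint N₂ ∘L N₂) ∘L ι := by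
          rw [← mul_def, hpu, sub_comp, comp_sub, smul_comp, comp_smul, one_def, id_comp]
          rfl
      _ = 1 - (1/4 : ℂ) • (adjoint V₂ * V₂) := by
          rw [hι, ← adjoint_comp_eq_of_intertwines hι hV₂ hV₂]
          rfl

/-- The restriction of a pentablock unitary `(N₁, N₂, N₃)` to a joint invariant closed
subspace `H` is a pentablock isometry: `(V₂, V₃)` is a Γ-isometry and
`V₁*V₁ = I - ¼ V₂*V₂`. -/
theorem statement3 {K : Type*} [NormedAddCommGroup K] [InnerProductSpace ℂ K]
    [CompleteSpace K] (N₁ N₂ N₃ : K →L[ℂ] K)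
    (h₁₂ : N₁ * N₂ = N₂ * N₁) (h₁₃ : N₁ * N₃ = N₃ * N₁) (h₂₃ : N₂ * N₃ = N₃ * N₂)
    (hn₁ : N₁ * adjoint N₁ = adjoint N₁ * N₁)
    (hn₂ : N₂ * adjoint N₂ = adjoint N₂ * N₂)
    (hn₃ : N₃ * adjoint N₃ = adjoint N₃ * N₃)
    (hu : adjoint N₃ * N₃ = 1 ∧ N₃ * adjoint N₃ = 1)
    (hΓ : N₂ = adjoint N₂ * N₃) (hb : ‖N₂‖ ≤ 2)
    (hpu : adjoint N₁ * N₁ = 1 - (1/4 : ℂ) • (adjoint N₂ * N₂))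
    (H : Submodule ℂ K) [CompleteSpace H]
    (hinv : ∀ x ∈ H, N₁ x ∈ H ∧ N₂ x ∈ H ∧ N₃ x ∈ H)
    (V₁ V₂ V₃ : H →L[ℂ] H)
    (hV : ∀ x : H, (V₁ x : K) = N₁ x ∧ (V₂ x : K) = N₂ x ∧ (V₃ x : K) = N₃ x) :
    V₂ * V₃ = V₃ * V₂ ∧
    adjoint V₃ * V₃ = 1 ∧
    V₂ = adjoint V₂ * V₃ ∧
    ‖V₂‖ ≤ 2 ∧
    adjoint V₁ * V₁ = 1 - (1/4 : ℂ) • (adjoint V₂ * V₂) :=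
  statement3_general N₁ N₂ N₃ h₂₃ hu hΓ hb hpu H V₁ V₂ V₃ hV
end

section
/- Let F be a complex Hilbert space and let (N₁, N₂, N₃) be pairwise commuting normal bounded operators on F with N₃ unitary, N₂ = N₂*N₃, ‖N₂‖ ≤ 2 and N₁*N₁ = I − (1/4)N₂*N₂. On the Hilbert space ℓ²(ℕ, F) of square-summable F-valued sequences, define T₁ by (T₁a)₀ = 0 and (T₁a)ₙ = N₁a_{n−1} for n ≥ 1, and define (T₂a)ₙ = N₂aₙ and (T₃a)ₙ = N₃aₙ for all n. Then T₁, T₂, T₃ are bounded, pairwise commuting, T₂ is normal, T₃ is unitary, T₂ = T₂*T₃, ‖T₂‖ ≤ 2, and T₁*T₁ = I − (1/4)T₂*T₂. -/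
/-!
Write `S` for the unilateral shift on `ℓ²(ℕ, F)` and `Φ N` for the ampliation `I ⊗ N`, acting
coordinatewise. Then `T₁ = S * Φ N₁`, `T₂ = Φ N₂`, `T₃ = Φ N₃`. Since `Φ` is a unital
`⋆`-homomorphism with `‖Φ N‖ ≤ ‖N‖`, every relation among the `Nᵢ` carries over to the `Tᵢ`.
The shift commutes with every `Φ N` and is an isometry, `S⋆S = 1`, so
`T₁⋆T₁ = Φ N₁⋆ * S⋆S * Φ N₁ = Φ (N₁⋆N₁)`.
-/

open ContinuousLinearMap

noncomputable section

namespace lp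

section RightShift

variable {𝕜 E : Type*} [NormedField 𝕜] [NormedAddCommGroup E] [NormedSpace 𝕜 E]

def rightShift : lp (fun _ : ℕ => E) 2 →ₗᵢ[𝕜] lp (fun _ : ℕ => E) 2 where
  toFun f := ⟨fun | 0 => 0 | n + 1 => f n, memℓp_gen <|
      (summable_nat_add_iff 1).mp ((lp.memℓp f).summable (by norm_num))⟩
  map_add' f g := lp.ext <| funext fun | 0 => (add_zero 0).symm | _ + 1 => rfl
  map_smul' c f := lp.ext <| funext fun | 0 => (smul_zero c).symm | _ + 1 => rfl
  norm_map' f := by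
    rw [norm_eq_tsum_rpow (by norm_num), norm_eq_tsum_rpow (by norm_num),
      ((lp.memℓp _).summable (by norm_num)).tsum_eq_zero_add]
    simp

end RightShift

section InnerProductSpace

variable {𝕜 E α : Type*} [RCLike 𝕜] [NormedAddCommGroup E] [InnerProductSpace 𝕜 E]
  [CompleteSpace E]

variable (𝕜 E α) in
def ampliation :
    (E →L[𝕜] E) →⋆ₐ[𝕜] (lp (fun _ : α => E) 2 →L[𝕜] lp (fun _ : α => E) 2) where
  toFun N := mapCLM 2 (fun _ => N) (norm_nonneg N) fun _ => le_rfl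
  map_one' := by ext; rfl
  map_mul' _ _ := by ext; rfl
  map_zero' := by ext; rfl
  map_add' _ _ := by ext; rfl
  commutes' _ := by ext; rfl
  map_star' N := by
    refine ((eq_adjoint_iff _ _).mpr fun f g => ?_).trans (star_eq_adjoint _).symm
    simp [lp.inner_eq_tsum, star_eq_adjoint, adjoint_inner_left]

theorem norm_ampliation_le (N : E →L[𝕜] E) : ‖ampliation 𝕜 E α N‖ ≤ ‖N‖ :=
  norm_mapCLM_le _ _ (norm_nonneg N) fun _ => le_rfl

theorem star_rightShift_mul_self :
    star (rightShift (𝕜 := 𝕜) (E := E)).toContinuousLinearMap *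
      rightShift.toContinuousLinearMap = 1 :=
  (norm_map_iff_adjoint_comp_self _).mp rightShift.norm_map

theorem commute_rightShift_ampliation (N : E →L[𝕜] E) :
    Commute (rightShift (𝕜 := 𝕜) (E := E)).toContinuousLinearMap (ampliation 𝕜 E ℕ N) := by
  ext f (_ | n)
  · exact (map_zero N).symm
  · rfl

end InnerProductSpace

end lp

end

theorem statement6_general {F : Type*} [NormedAddCommGroup F] [InnerProductSpace ℂ F]
    [CompleteSpace F] (N₁ N₂ N₃ : F →L[ℂ] F)
    (h₁₂ : N₁ * N₂ = N₂ * N₁) (h₁₃ : N₁ * N₃ = N₃ * N₁) (h₂₃ : N₂ * N₃ = N₃ * N₂)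
    (hn₂ : N₂ * adjoint N₂ = adjoint N₂ * N₂)
    (hu : adjoint N₃ * N₃ = 1 ∧ N₃ * adjoint N₃ = 1)
    (hΓ : N₂ = adjoint N₂ * N₃) (hb : ‖N₂‖ ≤ 2)
    (hpu : adjoint N₁ * N₁ = 1 - (1/4 : ℂ) • (adjoint N₂ * N₂)) :
    ∃ T₁ T₂ T₃ : lp (fun _ : ℕ => F) 2 →L[ℂ] lp (fun _ : ℕ => F) 2,
      (∀ a : lp (fun _ : ℕ => F) 2, (T₁ a) 0 = 0 ∧ ∀ n : ℕ, (T₁ a) (n + 1) = N₁ (a n)) ∧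
      (∀ (a : lp (fun _ : ℕ => F) 2) (n : ℕ), (T₂ a) n = N₂ (a n)) ∧
      (∀ (a : lp (fun _ : ℕ => F) 2) (n : ℕ), (T₃ a) n = N₃ (a n)) ∧
      T₁ * T₂ = T₂ * T₁ ∧ T₁ * T₃ = T₃ * T₁ ∧ T₂ * T₃ = T₃ * T₂ ∧
      T₂ * adjoint T₂ = adjoint T₂ * T₂ ∧
      adjoint T₃ * T₃ = 1 ∧ T₃ * adjoint T₃ = 1 ∧
      T₂ = adjoint T₂ * T₃ ∧ ‖T₂‖ ≤ 2 ∧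
      adjoint T₁ * T₁ = 1 - (1/4 : ℂ) • (adjoint T₂ * T₂) := by
  set Φ := lp.ampliation ℂ F ℕ
  set S := (lp.rightShift (𝕜 := ℂ) (E := F)).toContinuousLinearMap
  simp only [← star_eq_adjoint] at *
  refine ⟨S * Φ N₁, Φ N₂, Φ N₃, fun a => ⟨rfl, fun n => rfl⟩, fun a n => rfl, fun a n => rfl,
    (lp.commute_rightShift_ampliation N₂).mul_left (Commute.map h₁₂ Φ),
    (lp.commute_rightShift_ampliation N₃).mul_left (Commute.map h₁₃ Φ), Commute.map h₂₃ Φ,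
    ?_, ?_, ?_, ?_, (lp.norm_ampliation_le N₂).trans hb, ?_⟩
  · rw [← map_star, ← map_mul, ← map_mul, hn₂]
  · rw [← map_star, ← map_mul, hu.1, map_one]
  · rw [← map_star, ← map_mul, hu.2, map_one]
  · rw [← map_star, ← map_mul, ← hΓ]
  · calc star (S * Φ N₁) * (S * Φ N₁) = star (Φ N₁) * (star S * S) * Φ N₁ := by
          rw [star_mul, mul_assoc, mul_assoc, mul_assoc]
      _ = Φ (star N₁ * N₁) := by rw [lp.star_rightShift_mul_self, mul_one, map_mul, map_star]
      _ = 1 - (1/4 : ℂ) • (star (Φ N₂) * Φ N₂) := by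
          rw [hpu, map_sub, map_one, map_smul, map_mul, map_star]

/-- If `(N₁, N₂, N₃)` is a pentablock unitary on `F`, then on `ℓ²(ℕ, F)` the triple
`(T₁, T₂, T₃)`, where `T₁` is the unilateral shift weighted by `N₁` and `T₂, T₃` act
diagonally by `N₂, N₃`, is a quasi pentablock unitary: the `Tᵢ` are bounded, pairwise
commuting, `T₂` is normal, `T₃` is unitary, `T₂ = T₂*T₃`, `‖T₂‖ ≤ 2` and
`T₁*T₁ = I - ¼ T₂*T₂`. -/
theorem statement6 {F : Type*} [NormedAddCommGroup F] [InnerProductSpace ℂ F]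
    [CompleteSpace F] (N₁ N₂ N₃ : F →L[ℂ] F)
    (h₁₂ : N₁ * N₂ = N₂ * N₁) (h₁₃ : N₁ * N₃ = N₃ * N₁) (h₂₃ : N₂ * N₃ = N₃ * N₂)
    (hn₁ : N₁ * adjoint N₁ = adjoint N₁ * N₁)
    (hn₂ : N₂ * adjoint N₂ = adjoint N₂ * N₂)
    (hn₃ : N₃ * adjoint N₃ = adjoint N₃ * N₃)
    (hu : adjoint N₃ * N₃ = 1 ∧ N₃ * adjoint N₃ = 1)
    (hΓ : N₂ = adjoint N₂ * N₃) (hb : ‖N₂‖ ≤ 2)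
    (hpu : adjoint N₁ * N₁ = 1 - (1/4 : ℂ) • (adjoint N₂ * N₂)) :
    ∃ T₁ T₂ T₃ : lp (fun _ : ℕ => F) 2 →L[ℂ] lp (fun _ : ℕ => F) 2,
      (∀ a : lp (fun _ : ℕ => F) 2, (T₁ a) 0 = 0 ∧ ∀ n : ℕ, (T₁ a) (n + 1) = N₁ (a n)) ∧
      (∀ (a : lp (fun _ : ℕ => F) 2) (n : ℕ), (T₂ a) n = N₂ (a n)) ∧
      (∀ (a : lp (fun _ : ℕ => F) 2) (n : ℕ), (T₃ a) n = N₃ (a n)) ∧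
      T₁ * T₂ = T₂ * T₁ ∧ T₁ * T₃ = T₃ * T₁ ∧ T₂ * T₃ = T₃ * T₂ ∧
      T₂ * adjoint T₂ = adjoint T₂ * T₂ ∧
      adjoint T₃ * T₃ = 1 ∧ T₃ * adjoint T₃ = 1 ∧
      T₂ = adjoint T₂ * T₃ ∧ ‖T₂‖ ≤ 2 ∧
      adjoint T₁ * T₁ = 1 - (1/4 : ℂ) • (adjoint T₂ * T₂) :=
  statement6_general N₁ N₂ N₃ h₁₂ h₁₃ h₂₃ hn₂ hu hΓ hb hpu
end

section
/- Let (R₁, R₂, R₃) be pairwise commuting bounded linear operators on a complex Hilbert space H. The following are equivalent: (i) R₃ is unitary and there exist a complex Hilbert space K, a linear isometry J : H → K, and pairwise commuting normal bounded operators (N₁, N₂, N₃) on K with N₃ unitary, N₂ = N₂*N₃, ‖N₂‖ ≤ 2 and N₁*N₁ = I_K − (1/4)N₂*N₂, such that Nᵢ ∘ J = J ∘ Rᵢ for i = 1, 2, 3; (ii) R₂ and R₃ are normal, R₃ is unitary, R₂ = R₂*R₃, ‖R₂‖ ≤ 2, and R₁*R₁ = I_H − (1/4)R₂*R₂. -/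
/-!
(i) ⇒ (ii): if `V` is an isometry, `N V = V R` and `M V = V S`, then `V* (N* M) V = R* S`.
So compressing by `J` carries `N₂ = N₂* N₃` and `N₁* N₁ = I − ¼ N₂* N₂` down to the `Rᵢ`, and
`R₂ = R₂* R₃` with `R₃` a unitary commuting with `R₂` forces `R₂* = R₃* R₂` and `R₂` normal.

(ii) ⇒ (i): `R₁` commutes with `R₃*`, hence with `R₂* = R₃* R₂`, hence with
`R₁* R₁ = I − ¼ R₂* R₂`: it is quasinormal, so hyponormal. For a quasinormal `T` with
`D = √(T*T − TT*)` one has `D T = 0`, and the block operator `[[T, D], [0, T*]]` on `H ⊕ H` is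
normal with `N* N = T*T ⊕ T*T`. This is `N₁`; `N₂ = R₂ ⊕ R₂` and `N₃ = R₃ ⊕ R₃`.
-/

open ContinuousLinearMap

universe u

section StarMonoid

variable {A : Type*} [Monoid A] [StarMul A] {a u : A}

theorem Commute.star_right_of_mem_unitary (hu : u ∈ unitary A) (h : Commute a u) :
    Commute a (star u) :=
  calc a * star u = star u * u * a * star u := by rw [Unitary.star_mul_self_of_mem hu, one_mul]
    _ = star u * a * (u * star u) := by rw [mul_assoc (star u) u, ← h.eq]; simp only [mul_assoc]
    _ = star u * a := by rw [Unitary.mul_star_self_of_mem hu, mul_one]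

theorem star_eq_star_mul_of_eq_star_mul (hu : u ∈ unitary A) (hau : Commute a u)
    (h : a = star a * u) : star a = star u * a :=
  calc star a = star a * u * star u := by rw [mul_assoc, Unitary.mul_star_self_of_mem hu, mul_one]
    _ = star u * a := by rw [← h, (hau.star_right_of_mem_unitary hu).eq]

theorem isStarNormal_of_eq_star_mul (hu : u ∈ unitary A) (hau : Commute a u)
    (h : a = star a * u) : IsStarNormal a := by
  have hstar := star_eq_star_mul_of_eq_star_mul hu hau h
  refine ⟨?_⟩
  calc star a * a = star u * a * a := by rw [hstar]
    _ = a * star a := by rw [hstar, ← mul_assoc, (hau.star_right_of_mem_unitary hu).eq]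

end StarMonoid

section Quasinormal

variable {A : Type*} [CStarAlgebra A] [PartialOrder A] [StarOrderedRing A]

theorem IsSelfAdjoint.nonneg_of_odd_pow {a : A} (ha : IsSelfAdjoint a) {n : ℕ} (hn : Odd n)
    (h : 0 ≤ a ^ n) : 0 ≤ a := by
  rw [← cfc_pow_id (R := ℝ) a n ha, cfc_nonneg_iff _ a (by fun_prop) ha] at h
  rw [← cfc_id' ℝ a ha]
  exact cfc_nonneg fun x hx => hn.pow_nonneg_iff.mp (h x hx)

theorem mul_star_self_le_star_mul_self_of_commute {a : A} (ha : Commute a (star a * a)) :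
    a * star a ≤ star a * a := by
  set p := star a * a
  set x := a * star a
  -- `x² = p x`, so `(p - x) x = 0` and `(p - x)³ = (p - x) p (p - x) ≥ 0`.
  have hx : (p - x) * x = 0 := by
    rw [sub_mul, sub_eq_zero]
    simp only [x, p, ← mul_assoc]
    rw [mul_assoc a (star a) a, ha.eq]
  have hsa : IsSelfAdjoint (p - x) := (IsSelfAdjoint.star_mul_self a).sub (.mul_star_self a)
  have hcube : (p - x) ^ 3 = star (p - x) * p * (p - x) := by
    rw [hsa.star_eq, pow_succ, sq, mul_sub (p - x) p x, hx, sub_zero]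
  refine sub_nonneg.mp (hsa.nonneg_of_odd_pow (n := 3) (by decide) ?_)
  rw [hcube]
  exact star_left_conjugate_nonneg (star_mul_self_nonneg a) _

noncomputable def sqrtSelfCommutator (a : A) : A := CFC.sqrt (star a * a - a * star a)

theorem isSelfAdjoint_sqrtSelfCommutator (a : A) : IsSelfAdjoint (sqrtSelfCommutator a) :=
  (CFC.sqrt_nonneg _).isSelfAdjoint

theorem sqrtSelfCommutator_mul_self {a : A} (ha : Commute a (star a * a)) :
    sqrtSelfCommutator a * sqrtSelfCommutator a = star a * a - a * star a :=
  CFC.sqrt_mul_sqrt_self _ (sub_nonneg.mpr (mul_star_self_le_star_mul_self_of_commute ha))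

theorem sqrtSelfCommutator_mul_eq_zero {a : A} (ha : Commute a (star a * a)) :
    sqrtSelfCommutator a * a = 0 := by
  set d := sqrtSelfCommutator a
  refine (CStarRing.star_mul_self_eq_zero_iff _).mp ?_
  calc star (d * a) * (d * a) = star a * (star d * d * a) := by simp only [star_mul, mul_assoc]
    _ = star a * ((star a * a - a * star a) * a) := by
      rw [(isSelfAdjoint_sqrtSelfCommutator a).star_eq, sqrtSelfCommutator_mul_self ha]
    _ = 0 := by rw [sub_mul, mul_assoc a, ha.eq, sub_self, mul_zero]

theorem star_mul_sqrtSelfCommutator_eq_zero {a : A} (ha : Commute a (star a * a)) :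
    star a * sqrtSelfCommutator a = 0 := by
  simpa [(isSelfAdjoint_sqrtSelfCommutator a).star_eq] using
    congrArg star (sqrtSelfCommutator_mul_eq_zero ha)

theorem Commute.sqrtSelfCommutator {a b : A} (h : Commute b a) (h' : Commute b (star a)) :
    Commute b (sqrtSelfCommutator a) :=
  (((h'.mul_right h).sub_right (h.mul_right h')).symm.cfcₙ_nnreal NNReal.sqrt).symm

end Quasinormal

theorem norm_le_of_comp_eq {𝕜 E F : Type*} [NontriviallyNormedField 𝕜]
    [SeminormedAddCommGroup E] [NormedSpace 𝕜 E] [SeminormedAddCommGroup F] [NormedSpace 𝕜 F]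
    {V : E →L[𝕜] F} {N : F →L[𝕜] F} {R : E →L[𝕜] E} (hV : ∀ x, ‖V x‖ = ‖x‖) (hN : N ∘L V = V ∘L R) :
    ‖R‖ ≤ ‖N‖ :=
  opNorm_le_bound _ (norm_nonneg N) fun x =>
    calc ‖R x‖ = ‖N (V x)‖ := by rw [← hV, ← comp_apply, ← hN, comp_apply]
      _ ≤ ‖N‖ * ‖x‖ := by simpa only [hV] using N.le_opNorm (V x)

section Compression

variable {𝕜 H K : Type*} [RCLike 𝕜] [NormedAddCommGroup H] [InnerProductSpace 𝕜 H]
  [CompleteSpace H] [NormedAddCommGroup K] [InnerProductSpace 𝕜 K] [CompleteSpace K]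
  {V : H →L[𝕜] K} {N M : K →L[𝕜] K} {R S : H →L[𝕜] H}

theorem adjoint_comp_comp_eq_of_comp_eq (hV : adjoint V ∘L V = 1) (hN : N ∘L V = V ∘L R) :
    adjoint V ∘L N ∘L V = R := by
  rw [hN, ← comp_assoc, hV, one_def, id_comp]

theorem adjoint_comp_star_comp_eq_of_comp_eq (hV : adjoint V ∘L V = 1)
    (hN : N ∘L V = V ∘L R) : adjoint V ∘L star N ∘L V = star R := by
  rw [← adjoint_comp_comp_eq_of_comp_eq hV hN, star_eq_adjoint, star_eq_adjoint, adjoint_comp,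
    adjoint_comp, adjoint_adjoint, comp_assoc]

theorem adjoint_comp_star_mul_comp_eq_of_comp_eq (hV : adjoint V ∘L V = 1)
    (hN : N ∘L V = V ∘L R) (hM : M ∘L V = V ∘L S) :
    adjoint V ∘L (star N * M) ∘L V = star R * S := by
  rw [mul_def, comp_assoc, hM, ← comp_assoc (star N), ← comp_assoc,
    adjoint_comp_star_comp_eq_of_comp_eq hV hN, mul_def]

theorem eq_star_mul_of_comp_eq (hV : adjoint V ∘L V = 1) (hN : N ∘L V = V ∘L R)
    (hM : M ∘L V = V ∘L S) (h : N = star N * M) : R = star R * S := by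
  have hstar : star R = star S * R := by
    rw [← adjoint_comp_star_comp_eq_of_comp_eq hV hN,
      ← adjoint_comp_star_mul_comp_eq_of_comp_eq hV hM hN, ← star_star_mul, ← h]
  simpa using congrArg star hstar

theorem star_mul_self_eq_of_comp_eq (hV : adjoint V ∘L V = 1) (hN : N ∘L V = V ∘L R)
    (hM : M ∘L V = V ∘L S) (c : 𝕜) (h : star N * N = 1 - c • (star M * M)) :
    star R * R = 1 - c • (star S * S) := by
  rw [← adjoint_comp_star_mul_comp_eq_of_comp_eq hV hN hN, h,
    ← adjoint_comp_star_mul_comp_eq_of_comp_eq hV hM hM, sub_comp, comp_sub, smul_comp,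
    comp_smul, one_def, id_comp, hV]

end Compression

section BlockOperator

variable {𝕜 E : Type*} [RCLike 𝕜] [NormedAddCommGroup E] [NormedSpace 𝕜 E]

noncomputable def blockOp (a b c d : E →L[𝕜] E) : WithLp 2 (E × E) →L[𝕜] WithLp 2 (E × E) :=
  (WithLp.prodContinuousLinearEquiv 2 𝕜 E E).symm.toContinuousLinearMap ∘L
    (a.coprod b).prod (c.coprod d) ∘L
      (WithLp.prodContinuousLinearEquiv 2 𝕜 E E).toContinuousLinearMap

@[simp]
theorem ofLp_blockOp_apply (a b c d : E →L[𝕜] E) (z : WithLp 2 (E × E)) :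
    (blockOp a b c d z).ofLp = (a z.ofLp.1 + b z.ofLp.2, c z.ofLp.1 + d z.ofLp.2) := rfl

theorem ext_withLp_prod {S T : WithLp 2 (E × E) →L[𝕜] WithLp 2 (E × E)}
    (h : ∀ z, (S z).ofLp = (T z).ofLp) : S = T :=
  ext fun z => WithLp.ofLp_injective 2 (h z)

theorem blockOp_mul (a b c d a' b' c' d' : E →L[𝕜] E) :
    blockOp a b c d * blockOp a' b' c' d' =
      blockOp (a * a' + b * c') (a * b' + b * d') (c * a' + d * c') (c * b' + d * d') :=
  ext_withLp_prod fun z => by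
    refine Prod.ext ?_ ?_ <;>
      simp only [mul_apply_eq_comp, ofLp_blockOp_apply, WithLp.ofLp_fst, WithLp.ofLp_snd, map_add,
        add_apply] <;> abel

theorem norm_blockOp_diag_le (a : E →L[𝕜] E) : ‖blockOp a 0 0 a‖ ≤ ‖a‖ := by
  refine opNorm_le_bound _ (norm_nonneg a) fun z => le_of_sq_le_sq ?_ (by positivity)
  have h₁ := pow_le_pow_left₀ (norm_nonneg _) (a.le_opNorm z.ofLp.1) 2
  have h₂ := pow_le_pow_left₀ (norm_nonneg _) (a.le_opNorm z.ofLp.2) 2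
  rw [mul_pow, WithLp.prod_norm_sq_eq_of_L2, WithLp.prod_norm_sq_eq_of_L2]
  simp only [WithLp.fst, WithLp.snd, ofLp_blockOp_apply, zero_apply, add_zero, zero_add]
  rw [mul_pow] at h₁ h₂
  linarith

variable (𝕜 E) in
noncomputable def inlₗᵢ : E →ₗᵢ[𝕜] WithLp 2 (E × E) where
  toLinearMap :=
    (WithLp.prodContinuousLinearEquiv 2 𝕜 E E).symm.toLinearMap ∘ₗ LinearMap.inl 𝕜 E E
  norm_map' x := WithLp.norm_toLp_fst 2 E E x

theorem blockOp_apply_inlₗᵢ (a b d : E →L[𝕜] E) (x : E) :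
    blockOp a b 0 d (inlₗᵢ 𝕜 E x) = inlₗᵢ 𝕜 E (a x) :=
  WithLp.ofLp_injective 2 (Prod.ext (by simp [inlₗᵢ]) (by simp [inlₗᵢ]))

end BlockOperator

section BlockOperatorStar

variable {𝕜 E : Type*} [RCLike 𝕜] [NormedAddCommGroup E] [InnerProductSpace 𝕜 E]
  [CompleteSpace E]

theorem star_blockOp (a b c d : E →L[𝕜] E) :
    star (blockOp a b c d) = blockOp (star a) (star c) (star b) (star d) := by
  rw [star_eq_adjoint, eq_comm, eq_adjoint_iff]
  intro z w
  simp only [WithLp.prod_inner_apply, ofLp_blockOp_apply, inner_add_left, inner_add_right,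
    star_eq_adjoint, adjoint_inner_left]
  ring

noncomputable def diagOp : (E →L[𝕜] E) →⋆ₐ[𝕜] (WithLp 2 (E × E) →L[𝕜] WithLp 2 (E × E)) where
  toFun a := blockOp a 0 0 a
  map_one' := ext_withLp_prod fun z => Prod.ext (by simp) (by simp)
  map_mul' a b := by simp [blockOp_mul]
  map_zero' := ext_withLp_prod fun z => Prod.ext (by simp) (by simp)
  map_add' a b := ext_withLp_prod fun z => Prod.ext (by simp) (by simp)
  commutes' r := ext_withLp_prod fun z => Prod.ext (by simp) (by simp)
  map_star' a := by simp [star_blockOp]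

theorem diagOp_apply (a : E →L[𝕜] E) : diagOp a = blockOp a 0 0 a := rfl

end BlockOperatorStar

section NormalExtension

variable {E : Type*} [NormedAddCommGroup E] [InnerProductSpace ℂ E] [CompleteSpace E]
  {T : E →L[ℂ] E}

theorem star_mul_self_blockOp_sqrtSelfCommutator (hT : Commute T (star T * T)) :
    star (blockOp T (sqrtSelfCommutator T) 0 (star T)) *
      blockOp T (sqrtSelfCommutator T) 0 (star T) = diagOp (star T * T) := by
  simp only [star_blockOp, blockOp_mul, diagOp_apply, star_zero, star_star,
    (isSelfAdjoint_sqrtSelfCommutator T).star_eq, sqrtSelfCommutator_mul_self hT,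
    sqrtSelfCommutator_mul_eq_zero hT, star_mul_sqrtSelfCommutator_eq_zero hT, mul_zero,
    zero_mul, add_zero, sub_add_cancel]

theorem self_mul_star_blockOp_sqrtSelfCommutator (hT : Commute T (star T * T)) :
    blockOp T (sqrtSelfCommutator T) 0 (star T) *
      star (blockOp T (sqrtSelfCommutator T) 0 (star T)) = diagOp (star T * T) := by
  simp only [star_blockOp, blockOp_mul, diagOp_apply, star_zero, star_star,
    (isSelfAdjoint_sqrtSelfCommutator T).star_eq, sqrtSelfCommutator_mul_self hT,
    sqrtSelfCommutator_mul_eq_zero hT, star_mul_sqrtSelfCommutator_eq_zero hT, mul_zero,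
    zero_mul, add_zero, zero_add, add_sub_cancel]

theorem commute_blockOp_sqrtSelfCommutator_diagOp {S : E →L[ℂ] E} (h : Commute T S)
    (h' : Commute T (star S)) :
    Commute (blockOp T (sqrtSelfCommutator T) 0 (star T)) (diagOp S) := by
  have hS : Commute S (star T) := (commute_star_comm.mpr h').symm
  simp only [Commute, SemiconjBy, diagOp_apply, blockOp_mul, mul_zero, zero_mul, add_zero,
    zero_add, h.eq, hS.eq, (h.symm.sqrtSelfCommutator hS).eq]

end NormalExtension

/-- Characterization of quasi pentablock unitaries: a commuting triple `(R₁, R₂, R₃)` is a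
quasi pentablock unitary (`R₃` unitary and the triple extends, via an isometric embedding
`J`, to a pentablock unitary `(N₁, N₂, N₃)`) iff `(R₂, R₃)` is a Γ-unitary and
`R₁*R₁ = I - ¼ R₂*R₂`. -/
theorem statement8 {H : Type u} [NormedAddCommGroup H] [InnerProductSpace ℂ H]
    [CompleteSpace H] (R₁ R₂ R₃ : H →L[ℂ] H)
    (h₁₂ : R₁ * R₂ = R₂ * R₁) (h₁₃ : R₁ * R₃ = R₃ * R₁) (h₂₃ : R₂ * R₃ = R₃ * R₂) :
    ((adjoint R₃ * R₃ = 1 ∧ R₃ * adjoint R₃ = 1) ∧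
     ∃ (K : Type u) (_ : NormedAddCommGroup K) (_ : InnerProductSpace ℂ K)
        (_ : CompleteSpace K) (J : H →ₗᵢ[ℂ] K) (N₁ N₂ N₃ : K →L[ℂ] K),
        N₁ * N₂ = N₂ * N₁ ∧ N₁ * N₃ = N₃ * N₁ ∧ N₂ * N₃ = N₃ * N₂ ∧
        N₁ * adjoint N₁ = adjoint N₁ * N₁ ∧
        N₂ * adjoint N₂ = adjoint N₂ * N₂ ∧
        N₃ * adjoint N₃ = adjoint N₃ * N₃ ∧
        adjoint N₃ * N₃ = 1 ∧ N₃ * adjoint N₃ = 1 ∧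
        N₂ = adjoint N₂ * N₃ ∧ ‖N₂‖ ≤ 2 ∧
        adjoint N₁ * N₁ = 1 - (1/4 : ℂ) • (adjoint N₂ * N₂) ∧
        (∀ x : H, N₁ (J x) = J (R₁ x) ∧ N₂ (J x) = J (R₂ x) ∧ N₃ (J x) = J (R₃ x))) ↔
    (R₂ * adjoint R₂ = adjoint R₂ * R₂ ∧
     R₃ * adjoint R₃ = adjoint R₃ * R₃ ∧
     adjoint R₃ * R₃ = 1 ∧ R₃ * adjoint R₃ = 1 ∧
     R₂ = adjoint R₂ * R₃ ∧ ‖R₂‖ ≤ 2 ∧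
     adjoint R₁ * R₁ = 1 - (1/4 : ℂ) • (adjoint R₂ * R₂)) := by
  simp only [← star_eq_adjoint]
  constructor
  · rintro ⟨hR₃, K, _, _, _, J, N₁, N₂, N₃, -, -, -, -, -, -, -, -, hN₂, hN₂_norm, hN₁, hJ⟩
    have hu : R₃ ∈ unitary (H →L[ℂ] H) := Unitary.mem_iff.mpr hR₃
    set V : H →L[ℂ] K := J.toContinuousLinearMap
    have hV : adjoint V ∘L V = 1 := (norm_map_iff_adjoint_comp_self V).mp J.norm_map
    have hJ₁ : N₁ ∘L V = V ∘L R₁ := ext fun x => (hJ x).1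
    have hJ₂ : N₂ ∘L V = V ∘L R₂ := ext fun x => (hJ x).2.1
    have hJ₃ : N₃ ∘L V = V ∘L R₃ := ext fun x => (hJ x).2.2
    have hΓ : R₂ = star R₂ * R₃ := eq_star_mul_of_comp_eq hV hJ₂ hJ₃ hN₂
    exact ⟨(isStarNormal_of_eq_star_mul hu h₂₃ hΓ).star_comm_self.eq.symm,
      (commute_unitary_self_star hu).eq, hR₃.1, hR₃.2, hΓ,
      (norm_le_of_comp_eq J.norm_map hJ₂).trans hN₂_norm,
      star_mul_self_eq_of_comp_eq hV hJ₁ hJ₂ _ hN₁⟩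
  · rintro ⟨hR₂, hR₃, hR₃₁, hR₃₂, hΓ, hR₂_norm, hR₁⟩
    have hu : R₃ ∈ unitary (H →L[ℂ] H) := Unitary.mem_iff.mpr ⟨hR₃₁, hR₃₂⟩
    have c₁₃ : Commute R₁ (star R₃) := Commute.star_right_of_mem_unitary hu h₁₃
    have c₁₂ : Commute R₁ (star R₂) := by
      rw [star_eq_star_mul_of_eq_star_mul hu h₂₃ hΓ]
      exact c₁₃.mul_right h₁₂
    have hq : Commute R₁ (star R₁ * R₁) := by
      rw [hR₁]
      exact (Commute.one_right _).sub_right ((c₁₂.mul_right h₁₂).smul_right _)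
    refine ⟨⟨hR₃₁, hR₃₂⟩, WithLp 2 (H × H), inferInstance, inferInstance, inferInstance,
      inlₗᵢ ℂ H, blockOp R₁ (sqrtSelfCommutator R₁) 0 (star R₁), diagOp R₂, diagOp R₃,
      (commute_blockOp_sqrtSelfCommutator_diagOp h₁₂ c₁₂).eq,
      (commute_blockOp_sqrtSelfCommutator_diagOp h₁₃ c₁₃).eq,
      ?_, ?_, ?_, ?_, ?_, ?_, ?_, (norm_blockOp_diag_le R₂).trans hR₂_norm, ?_,
      fun x => ⟨blockOp_apply_inlₗᵢ .., blockOp_apply_inlₗᵢ .., blockOp_apply_inlₗᵢ ..⟩⟩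
    · rw [← map_mul, h₂₃, map_mul]
    · rw [self_mul_star_blockOp_sqrtSelfCommutator hq,
        star_mul_self_blockOp_sqrtSelfCommutator hq]
    · rw [← map_star, ← map_mul, ← map_mul, hR₂]
    · rw [← map_star, ← map_mul, ← map_mul, hR₃]
    · rw [← map_star, ← map_mul, hR₃₁, map_one]
    · rw [← map_star, ← map_mul, hR₃₂, map_one]
    · rw [← map_star, ← map_mul, ← hΓ]
    · rw [star_mul_self_blockOp_sqrtSelfCommutator hq, hR₁, map_sub, map_one, map_smul,
        map_mul, map_star]
end

section
/- Let V₁ and V₂ be commuting isometries on a complex Hilbert space H (V₁*V₁ = V₂*V₂ = I and V₁V₂ = V₂V₁). Set W₁ = (V₁ − V₂)/2, W₂ = V₁ + V₂ and W₃ = V₁V₂. Then (W₁, W₂, W₃) is a pairwise commuting triple satisfying: W₃ is an isometry (W₃*W₃ = I), W₂ = W₂*W₃, ‖W₂‖ ≤ 2, and W₁*W₁ = I − (1/4)W₂*W₂. Consequently (W₁, W₂, W₃) is a pentablock isometry. -/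
open ContinuousLinearMap

/-- If `V₁, V₂` are commuting isometries, then `(W₁, W₂, W₃) = ((V₁-V₂)/2, V₁+V₂, V₁V₂)`
is a pairwise commuting triple with `W₃*W₃ = I`, `W₂ = W₂*W₃`, `‖W₂‖ ≤ 2` and
`W₁*W₁ = I - ¼ W₂*W₂`; i.e. it is a pentablock isometry. -/
theorem statement11 {H : Type*} [NormedAddCommGroup H] [InnerProductSpace ℂ H]
    [CompleteSpace H] (V₁ V₂ : H →L[ℂ] H)
    (hi₁ : adjoint V₁ * V₁ = 1) (hi₂ : adjoint V₂ * V₂ = 1)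
    (hc : V₁ * V₂ = V₂ * V₁) :
    ∀ W₁ W₂ W₃ : H →L[ℂ] H,
      W₁ = (1/2 : ℂ) • (V₁ - V₂) → W₂ = V₁ + V₂ → W₃ = V₁ * V₂ →
      (W₁ * W₂ = W₂ * W₁ ∧ W₁ * W₃ = W₃ * W₁ ∧ W₂ * W₃ = W₃ * W₂ ∧
       adjoint W₃ * W₃ = 1 ∧
       W₂ = adjoint W₂ * W₃ ∧ ‖W₂‖ ≤ 2 ∧
       adjoint W₁ * W₁ = 1 - (1/4 : ℂ) • (adjoint W₂ * W₂)) := by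
  intro W₁ W₂ W₃ h1 h2 h3
  subst h1 h2 h3
  have hn1 : ‖V₁‖ ≤ 1 := by
    refine opNorm_le_bound _ zero_le_one fun x => ?_
    rw [(norm_map_iff_adjoint_comp_self V₁).2 hi₁ x, one_mul]
  have hn2 : ‖V₂‖ ≤ 1 := by
    refine opNorm_le_bound _ zero_le_one fun x => ?_
    rw [(norm_map_iff_adjoint_comp_self V₂).2 hi₂ x, one_mul]
  have ha1 : adjoint ((1/2 : ℂ) • (V₁ - V₂))
      = (1/2 : ℂ) • (adjoint V₁ - adjoint V₂) := by
    rw [map_smulₛₗ, map_sub]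
    congr 1
    rw [map_div₀, map_one, map_ofNat]
  have ha2 : adjoint (V₁ + V₂) = adjoint V₁ + adjoint V₂ := map_add _ _ _
  have ha3 : adjoint (V₁ * V₂) = adjoint V₂ * adjoint V₁ := adjoint_comp _ _
  have k1 : V₁ * (V₁ * V₂) = V₁ * V₂ * V₁ := by
    rw [mul_assoc V₁ V₂ V₁, ← hc]
  have k2 : V₂ * (V₁ * V₂) = V₁ * V₂ * V₂ := by
    rw [← mul_assoc, ← hc, mul_assoc]
  refine ⟨?_, ?_, ?_, ?_, ?_, ?_, ?_⟩
  · simp only [smul_mul_assoc, mul_smul_comm, sub_mul, mul_sub, mul_add, add_mul]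
    rw [hc]
    module
  · simp only [smul_mul_assoc, mul_smul_comm, sub_mul, mul_sub]
    rw [k1, k2]
  · simp only [add_mul, mul_add]
    rw [k1, k2]
  · rw [ha3, mul_assoc, ← mul_assoc (adjoint V₁), hi₁, one_mul, hi₂]
  · rw [ha2, add_mul, ← mul_assoc, hi₁, one_mul, hc, ← mul_assoc, hi₂, one_mul,
      add_comm]
  · calc ‖V₁ + V₂‖ ≤ ‖V₁‖ + ‖V₂‖ := norm_add_le _ _
      _ ≤ 2 := by linarith
  · rw [ha1, ha2, smul_mul_assoc, mul_smul_comm, sub_mul, mul_sub, mul_sub,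
      add_mul, mul_add, mul_add, hi₁, hi₂, smul_smul]
    module
end

section
/- Let (V₁, V₂, V₃) be pairwise commuting bounded linear operators on a complex Hilbert space H satisfying V₃*V₃ = I, V₂ = V₂*V₃, ‖V₂‖ ≤ 2 and V₁*V₁ = I − (1/4)V₂*V₂, and suppose moreover that (V₃*)ⁿx → 0 as n → ∞ for every x ∈ H (V₃ is a pure isometry). Let K be a complex Hilbert space and J : K → H a linear isometry whose range J(K) is invariant under V₁, V₂ and V₃. Define Wᵢ = J*VᵢJ for i = 1, 2, 3. Then W₁, W₂, W₃ are pairwise commuting, J ∘ Wᵢ = Vᵢ ∘ J for each i, W₃*W₃ = I_K, W₂ = W₂*W₃, ‖W₂‖ ≤ 2, W₁*W₁ = I_K − (1/4)W₂*W₂, and (W₃*)ⁿy → 0 as n → ∞ for every y ∈ K. In other words, (W₁, W₂, W₃) is again a pure pentablock isometry. -/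
/-!
Since `J* J = 1` and the range of `J` is invariant under each `Vᵢ`, we have `J Wᵢ = Vᵢ J`.
Hence compression by `J` is multiplicative in the form `J* (A Vᵢ) J = (J* A J) Wᵢ` for every `A`,
and taking `A = Vⱼ` or `A = Vⱼ*` transports each defining identity of a pentablock isometry from
`(V₁, V₂, V₃)` to `(W₁, W₂, W₃)`. Purity passes down because `W₃*ⁿ J* = J* V₃*ⁿ` and `J*` is a
contraction.
-/

open ContinuousLinearMap Filter Topology

namespace ContinuousLinearMap

variable {𝕜 E F : Type*} [RCLike 𝕜]
  [NormedAddCommGroup E] [InnerProductSpace 𝕜 E] [CompleteSpace E]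
  [NormedAddCommGroup F] [InnerProductSpace 𝕜 F] [CompleteSpace F]
  {J : F →L[𝕜] E}

theorem norm_le_one_of_adjoint_comp_self (hJ : adjoint J ∘L J = 1) : ‖J‖ ≤ 1 :=
  opNorm_le_bound J zero_le_one fun x => by
    rw [(norm_map_iff_adjoint_comp_self J).mpr hJ x, one_mul]

theorem comp_compress_of_mapsTo_range (hJ : adjoint J ∘L J = 1) {A : E →L[𝕜] E}
    (hA : ∀ x, A (J x) ∈ Set.range J) : J ∘L (adjoint J ∘L (A ∘L J)) = A ∘L J := by
  ext x
  obtain ⟨y, hy⟩ := hA x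
  simp only [comp_apply, ← hy, ← comp_apply (adjoint J) J, hJ, one_apply_eq_self]

theorem compress_mul {A B : E →L[𝕜] E} (hB : J ∘L (adjoint J ∘L (B ∘L J)) = B ∘L J) :
    adjoint J ∘L ((A * B) ∘L J) =
      (adjoint J ∘L (A ∘L J)) * (adjoint J ∘L (B ∘L J)) := by
  simp only [mul_def, comp_assoc, hB]

theorem adjoint_compress (A : E →L[𝕜] E) :
    adjoint (adjoint J ∘L (A ∘L J)) = adjoint J ∘L (adjoint A ∘L J) := by
  simp only [adjoint_comp, adjoint_adjoint, comp_assoc]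

theorem norm_compress_le (hJ : adjoint J ∘L J = 1) (A : E →L[𝕜] E) :
    ‖adjoint J ∘L (A ∘L J)‖ ≤ ‖A‖ := by
  have hJ₁ := norm_le_one_of_adjoint_comp_self hJ
  calc ‖adjoint J ∘L (A ∘L J)‖ ≤ ‖adjoint J‖ * (‖A‖ * ‖J‖) :=
        (opNorm_comp_le _ _).trans (by gcongr; exact opNorm_comp_le _ _)
    _ ≤ 1 * (‖A‖ * 1) := by
        rw [LinearIsometryEquiv.norm_map]
        gcongr
    _ = ‖A‖ := by ring

theorem adjoint_pow_comp_adjoint_of_comp_eq {W : F →L[𝕜] F} {V : E →L[𝕜] E}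
    (hWV : J ∘L W = V ∘L J) (n : ℕ) :
    (adjoint W ^ n) ∘L adjoint J = adjoint J ∘L (adjoint V ^ n) := by
  have hstep : adjoint W ∘L adjoint J = adjoint J ∘L adjoint V := by
    rw [← adjoint_comp, ← adjoint_comp, hWV]
  induction n with
  | zero => simp only [pow_zero, one_def, id_comp, comp_id]
  | succ n ih => rw [pow_succ, pow_succ, mul_def, mul_def, comp_assoc, hstep, ← comp_assoc, ih,
      comp_assoc]

theorem tendsto_norm_adjoint_pow_of_comp_eq (hJ : adjoint J ∘L J = 1) {W : F →L[𝕜] F}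
    {V : E →L[𝕜] E} (hWV : J ∘L W = V ∘L J)
    (hV : ∀ x, Tendsto (fun n : ℕ => ‖(adjoint V ^ n) x‖) atTop (𝓝 0)) (y : F) :
    Tendsto (fun n : ℕ => ‖(adjoint W ^ n) y‖) atTop (𝓝 0) := by
  have hJ' : ‖adjoint J‖ ≤ 1 := by
    rw [LinearIsometryEquiv.norm_map]; exact norm_le_one_of_adjoint_comp_self hJ
  refine squeeze_zero (fun _ => norm_nonneg _) (fun n => ?_) (hV (J y))
  have hy : (adjoint W ^ n) y = adjoint J ((adjoint V ^ n) (J y)) := by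
    rw [← comp_apply (adjoint J), ← adjoint_pow_comp_adjoint_of_comp_eq hWV, comp_apply,
      ← comp_apply (adjoint J) J, hJ, one_apply_eq_self]
  rw [hy]
  exact (le_opNorm _ _).trans (mul_le_of_le_one_left (norm_nonneg _) hJ')

end ContinuousLinearMap

/-- The compression of a pure pentablock isometry `(V₁, V₂, V₃)` to the range of an
isometry `J` whose range is jointly invariant is again a pure pentablock isometry:
setting `Wᵢ = J* Vᵢ J`, the `Wᵢ` commute pairwise, `J` intertwines `Wᵢ` with `Vᵢ`,
`W₃*W₃ = I`, `W₂ = W₂*W₃`, `‖W₂‖ ≤ 2`, `W₁*W₁ = I - ¼ W₂*W₂` and `W₃` is pure. -/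
theorem statement12 {H K : Type*}
    [NormedAddCommGroup H] [InnerProductSpace ℂ H] [CompleteSpace H]
    [NormedAddCommGroup K] [InnerProductSpace ℂ K] [CompleteSpace K]
    (V₁ V₂ V₃ : H →L[ℂ] H)
    (h₁₂ : V₁ * V₂ = V₂ * V₁) (h₁₃ : V₁ * V₃ = V₃ * V₁) (h₂₃ : V₂ * V₃ = V₃ * V₂)
    (hiso : adjoint V₃ * V₃ = 1) (hΓ : V₂ = adjoint V₂ * V₃) (hb : ‖V₂‖ ≤ 2)
    (hpi : adjoint V₁ * V₁ = 1 - (1/4 : ℂ) • (adjoint V₂ * V₂))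
    (hpure : ∀ x : H, Tendsto (fun n : ℕ => ‖((adjoint V₃) ^ n) x‖) atTop (𝓝 0))
    (J : K →L[ℂ] H) (hJ : ∀ x : K, ‖J x‖ = ‖x‖)
    (hrange : ∀ x : K, V₁ (J x) ∈ Set.range J ∧ V₂ (J x) ∈ Set.range J ∧
      V₃ (J x) ∈ Set.range J) :
    ∀ W₁ W₂ W₃ : K →L[ℂ] K,
      W₁ = adjoint J ∘L (V₁ ∘L J) → W₂ = adjoint J ∘L (V₂ ∘L J) →
      W₃ = adjoint J ∘L (V₃ ∘L J) →
      (W₁ * W₂ = W₂ * W₁ ∧ W₁ * W₃ = W₃ * W₁ ∧ W₂ * W₃ = W₃ * W₂ ∧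
       (∀ x : K, J (W₁ x) = V₁ (J x) ∧ J (W₂ x) = V₂ (J x) ∧ J (W₃ x) = V₃ (J x)) ∧
       adjoint W₃ * W₃ = 1 ∧
       W₂ = adjoint W₂ * W₃ ∧ ‖W₂‖ ≤ 2 ∧
       adjoint W₁ * W₁ = 1 - (1/4 : ℂ) • (adjoint W₂ * W₂) ∧
       (∀ y : K, Tendsto (fun n : ℕ => ‖((adjoint W₃) ^ n) y‖) atTop (𝓝 0))) := by
  rintro _ _ _ rfl rfl rfl
  have hJJ : adjoint J ∘L J = 1 := (norm_map_iff_adjoint_comp_self J).mp hJ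
  have hi₁ := comp_compress_of_mapsTo_range hJJ fun x => (hrange x).1
  have hi₂ := comp_compress_of_mapsTo_range hJJ fun x => (hrange x).2.1
  have hi₃ := comp_compress_of_mapsTo_range hJJ fun x => (hrange x).2.2
  refine ⟨by rw [← compress_mul hi₂, ← compress_mul hi₁, h₁₂],
    by rw [← compress_mul hi₃, ← compress_mul hi₁, h₁₃],
    by rw [← compress_mul hi₃, ← compress_mul hi₂, h₂₃],
    fun x => ⟨congr($hi₁ x), congr($hi₂ x), congr($hi₃ x)⟩,
    by rw [adjoint_compress, ← compress_mul hi₃, hiso, one_def, id_comp, hJJ],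
    by rw [adjoint_compress, ← compress_mul hi₃, ← hΓ],
    (norm_compress_le hJJ V₂).trans hb,
    by rw [adjoint_compress, ← compress_mul hi₁, hpi, adjoint_compress, ← compress_mul hi₂,
      sub_comp, comp_sub, smul_comp, comp_smul, one_def, id_comp, hJJ],
    tendsto_norm_adjoint_pow_of_comp_eq hJJ hi₃ hpure⟩
end

section
/- Let R₁ be an injective bounded linear operator on a complex Hilbert space H that commutes with R₁*R₁, let |R₁| = (R₁*R₁)^{1/2} be the positive square root, and let V be an isometry on H with R₁ = V|R₁| (the polar decomposition; V is an isometry because R₁ is injective). Then V commutes with |R₁|, i.e. V|R₁| = |R₁|V. Moreover, if R₂ is a normal bounded operator on H commuting with R₁, then V commutes with R₂, i.e. VR₂ = R₂V. -/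
open ContinuousLinearMap

section Aux

variable {H : Type*} [NormedAddCommGroup H] [InnerProductSpace ℂ H] [CompleteSpace H]

open scoped InnerProductSpace

/-- If `P` is self-adjoint and injective (hence with dense range) and `A * P = 0`,
then `A = 0`. -/
lemma aux_eq_zero_of_mul_eq_zero {P A : H →L[ℂ] H} (hP : IsSelfAdjoint P)
    (hinj : Function.Injective P) (h : A * P = 0) : A = 0 := by
  have hPadj : adjoint P = P := isSelfAdjoint_iff'.mp hP
  have h' : ∀ x, A (P x) = 0 := fun x => by
    have := congrArg (fun (T : H →L[ℂ] H) => T x) h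
    simpa [mul_apply] using this
  have hA : adjoint A = 0 := by
    ext y
    have key : P (adjoint A y) = 0 := by
      have h2 : ∀ x : H, ⟪x, P (adjoint A y)⟫_ℂ = 0 := by
        intro x
        calc ⟪x, P (adjoint A y)⟫_ℂ = ⟪P x, adjoint A y⟫_ℂ := by
              rw [← adjoint_inner_right P]; rw [hPadj]
          _ = ⟪A (P x), y⟫_ℂ := adjoint_inner_right A _ _
          _ = 0 := by rw [h']; simp
      have := h2 (P (adjoint A y))
      rwa [inner_self_eq_zero] at this
    have : adjoint A y = 0 := hinj (by simpa using key)
    simpa using this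
  calc A = adjoint (adjoint A) := (adjoint_adjoint A).symm
    _ = 0 := by rw [hA]; simp

/-- Anything commuting with a self-adjoint operator commutes with its real continuous
functional calculus. -/
lemma aux_commute_cfc {a b : H →L[ℂ] H} (ha : IsSelfAdjoint a) (hb : Commute b a)
    (f : ℝ → ℝ) : Commute b (cfc f a) := by
  by_cases hf : ContinuousOn f (spectrum ℝ a)
  · rw [cfc_apply f a ha hf]
    set φ := cfcHom (R := ℝ) ha with hφ
    have hφcont : Continuous φ := (cfcHom_isClosedEmbedding ha).continuous
    set S : Set C(spectrum ℝ a, ℝ) := {g | Commute b (φ g)} with hS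
    have hSclosed : IsClosed S := by
      have : S = φ ⁻¹' {x | b * x = x * b} := rfl
      rw [this]
      exact (isClosed_eq (continuous_const.mul continuous_id)
        ((continuous_id).mul continuous_const)).preimage hφcont
    have haev : ∀ p : Polynomial ℝ, Commute b (Polynomial.aeval a p) := by
      intro p
      induction p using Polynomial.induction_on' with
      | add p q hp hq => simpa [map_add] using hp.add_right hq
      | monomial n c =>
          rw [Polynomial.aeval_monomial]
          exact (Algebra.commute_algebraMap_right c b).mul_right (hb.pow_right n)
    have hpoly : (polynomialFunctions (spectrum ℝ a) : Set C(spectrum ℝ a, ℝ)) ⊆ S := by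
      intro g hg
      rw [polynomialFunctions_coe] at hg
      obtain ⟨p, rfl⟩ := hg
      have hcont : ContinuousOn (fun x : ℝ => p.eval x) (spectrum ℝ a) :=
        p.continuous_aeval.continuousOn
      have : φ (Polynomial.toContinuousMapOnAlgHom (spectrum ℝ a) p) =
          cfc (fun x : ℝ => p.eval x) a := by
        rw [cfc_apply (fun x : ℝ => p.eval x) a ha hcont]
        congr 1
      show Commute b (φ _)
      rw [this, cfc_polynomial p a ha]
      exact haev p
    have htop : closure (polynomialFunctions (spectrum ℝ a) : Set C(spectrum ℝ a, ℝ)) =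
        Set.univ := by
      have h1 := ContinuousMap.subalgebra_topologicalClosure_eq_top_of_separatesPoints
        (polynomialFunctions (spectrum ℝ a))
        (polynomialFunctions_separatesPoints (spectrum ℝ a))
      rw [← Subalgebra.topologicalClosure_coe, h1, Algebra.coe_top]
    have : S = Set.univ := Set.eq_univ_of_univ_subset <| by
      rw [← htop]
      exact hSclosed.closure_subset_iff.mpr hpoly
    exact (Set.eq_univ_iff_forall.mp this) _
  · rw [cfc_apply_of_not_continuousOn a hf]
    exact Commute.zero_right b

set_option synthInstance.maxHeartbeats 400000 in
/-- Anything commuting with `P * P` for positive `P` commutes with `P`. -/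
lemma aux_commute_of_commute_sq {P B : H →L[ℂ] H} (hP : P.IsPositive)
    (hB : Commute B (P * P)) : Commute B P := by
  have hPsa : IsSelfAdjoint P := hP.isSelfAdjoint
  have h0P : (0 : H →L[ℂ] H) ≤ P := (nonneg_iff_isPositive P).mpr hP
  have h0A : (0 : H →L[ℂ] H) ≤ P * P := by
    simpa [hPsa.star_eq] using star_mul_self_nonneg P
  have hAsa : IsSelfAdjoint (P * P) := .of_nonneg h0A
  have key : P = cfc (fun x : ℝ => (NNReal.sqrt x.toNNReal : ℝ)) (P * P) := by
    have h1 : CFC.sqrt (P * P) = P := (CFC.sqrt_eq_iff _ _ h0A h0P).mpr rfl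
    conv_lhs => rw [← h1]
    rw [CFC.sqrt_eq_cfc, cfc_nnreal_eq_real _ _ h0A]
  rw [key]
  exact aux_commute_cfc hAsa hB _

/-- **Fuglede's theorem**: if `N` is normal and `T * N = N * T`, then
`T * star N = star N * T`. -/
lemma aux_fuglede {N T : H →L[ℂ] H} (hN : Commute (star N) N)
    (hTN : T * N = N * T) : T * star N = star N * T := by
  rcases subsingleton_or_nontrivial H with hH | hH
  · exact Subsingleton.elim _ _
  classical
  letI : NormedAlgebra ℚ (H →L[ℂ] H) := .restrictScalars ℚ ℂ (H →L[ℂ] H)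
  open NormedSpace in
  have hTNc : Commute T N := hTN
  have hderiv : ∀ (c : H →L[ℂ] H), Differentiable ℂ (fun z : ℂ => NormedSpace.exp (z • c)) :=
    fun c t => (hasDerivAt_exp_smul_const (𝕂 := ℂ) c t).differentiableAt
  set G : ℂ → (H →L[ℂ] H) := fun z =>
    NormedSpace.exp (z • (-star N)) * T * NormedSpace.exp (z • star N) with hG
  have hGdiff : Differentiable ℂ G :=
    ((hderiv (-star N)).mul (differentiable_const T)).mul (hderiv (star N))
  have hexp_inv : ∀ (x : H →L[ℂ] H), NormedSpace.exp x * NormedSpace.exp (-x) = 1 :=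
    fun x => by
      rw [← NormedSpace.exp_add_of_commute ((Commute.refl x).neg_right), add_neg_cancel,
        NormedSpace.exp_zero]
  have hGbdd : ∀ z : ℂ, ‖G z‖ ≤ ‖T‖ := by
    intro z
    have hTe : Commute T (NormedSpace.exp ((starRingEnd ℂ z) • N)) :=
      (hTNc.smul_right (starRingEnd ℂ z)).exp_right
    have hTid : NormedSpace.exp ((starRingEnd ℂ z) • N) * T *
        NormedSpace.exp (-((starRingEnd ℂ z) • N)) = T := by
      rw [← hTe.eq, mul_assoc, hexp_inv, mul_one]
    have hcommN : Commute (z • (-star N)) ((starRingEnd ℂ z) • N) :=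
      ((hN.neg_left).smul_left z).smul_right (starRingEnd ℂ z)
    have hcommN' : Commute (-((starRingEnd ℂ z) • N)) (z • star N) :=
      (((hN.symm).smul_left (starRingEnd ℂ z)).neg_left).smul_right z
    have hu : G z = NormedSpace.exp (z • (-star N) + (starRingEnd ℂ z) • N) * T *
        NormedSpace.exp (-((starRingEnd ℂ z) • N) + z • star N) := by
      rw [hG]
      simp only []
      rw [NormedSpace.exp_add_of_commute hcommN, NormedSpace.exp_add_of_commute hcommN']
      conv_lhs => rw [← hTid]
      simp only [mul_assoc]
    have hskew1 : (z • (-star N) + (starRingEnd ℂ z) • N) ∈ skewAdjoint (H →L[ℂ] H) := by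
      rw [skewAdjoint.mem_iff]
      simp only [star_add, star_smul, star_neg, star_star, starRingEnd_apply, smul_neg, neg_add,
        neg_neg, star_trivial]
      abel
    have hskew2 : (-((starRingEnd ℂ z) • N) + z • star N) ∈ skewAdjoint (H →L[ℂ] H) := by
      rw [skewAdjoint.mem_iff]
      simp only [star_add, star_smul, star_neg, star_star, starRingEnd_apply, smul_neg, neg_add,
        neg_neg, star_trivial]
      abel
    have hu1 := exp_mem_unitary_of_mem_skewAdjoint hskew1
    have hu2 := exp_mem_unitary_of_mem_skewAdjoint hskew2
    rw [hu, CStarRing.norm_mul_mem_unitary _ hu2, CStarRing.norm_mem_unitary_mul _ hu1]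
  have hGconst : ∀ z : ℂ, G z = G 0 := fun z => by
    apply hGdiff.apply_eq_apply_of_bounded
    apply isBounded_iff_forall_norm_le.mpr
    exact ⟨‖T‖, by rintro x ⟨z, rfl⟩; exact hGbdd z⟩
  have hG0 : G 0 = T := by simp [hG]
  have hTexp : ∀ z : ℂ, T * NormedSpace.exp (z • star N) =
      NormedSpace.exp (z • star N) * T := by
    intro z
    have h1 : G z = T := (hGconst z).trans hG0
    have h4 : NormedSpace.exp (z • star N) * G z = T * NormedSpace.exp (z • star N) := by
      show NormedSpace.exp (z • star N) * (NormedSpace.exp (z • (-star N)) * T *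
        NormedSpace.exp (z • star N)) = _
      rw [smul_neg, ← mul_assoc, ← mul_assoc, hexp_inv, one_mul]
    rw [← h4, h1]
  have hd1 : HasDerivAt (fun z : ℂ => T * NormedSpace.exp (z • star N))
      (T * (NormedSpace.exp ((0 : ℂ) • star N) * star N)) 0 :=
    (hasDerivAt_exp_smul_const (𝕂 := ℂ) (star N) 0).const_mul T
  have hd2 : HasDerivAt (fun z : ℂ => NormedSpace.exp (z • star N) * T)
      (NormedSpace.exp ((0 : ℂ) • star N) * star N * T) 0 :=
    (hasDerivAt_exp_smul_const (𝕂 := ℂ) (star N) 0).mul_const T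
  have hd1' : HasDerivAt (fun z : ℂ => T * NormedSpace.exp (z • star N))
      (NormedSpace.exp ((0 : ℂ) • star N) * star N * T) 0 :=
    hd2.congr_of_eventuallyEq (Filter.Eventually.of_forall fun z => (hTexp z))
  have := hd1.unique hd1'
  simpa [NormedSpace.exp_zero] using this

end Aux

open scoped InnerProductSpace in
/-- Let `R₁` be injective, commuting with `R₁*R₁`, let `P = |R₁|` be the positive square
root of `R₁*R₁`, and let `V` be an isometry with `R₁ = VP` (polar decomposition). Then
`V` commutes with `P`; moreover if `R₂` is normal and commutes with `R₁`, then `V`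
commutes with `R₂`. -/
theorem statement14 {H : Type*} [NormedAddCommGroup H] [InnerProductSpace ℂ H]
    [CompleteSpace H] (R₁ P V R₂ : H →L[ℂ] H)
    (hinj : Function.Injective R₁)
    (hq : R₁ * (adjoint R₁ * R₁) = (adjoint R₁ * R₁) * R₁)
    (hP : P.IsPositive) (hP2 : P * P = adjoint R₁ * R₁)
    (hV : ∀ x : H, ‖V x‖ = ‖x‖) (hpolar : R₁ = V * P)
    (hn₂ : R₂ * adjoint R₂ = adjoint R₂ * R₂)
    (hc : R₁ * R₂ = R₂ * R₁) :
    V * P = P * V ∧ V * R₂ = R₂ * V := by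
  have hPsa : IsSelfAdjoint P := hP.isSelfAdjoint
  -- `P` is injective
  have hPinj : Function.Injective P := by
    intro x y hxy
    rw [← sub_eq_zero, ← map_sub] at hxy
    set u := x - y with hu
    have h1 : ⟪R₁ u, R₁ u⟫_ℂ = 0 := by
      calc ⟪R₁ u, R₁ u⟫_ℂ = ⟪(adjoint R₁) (R₁ u), u⟫_ℂ := (adjoint_inner_left R₁ _ _).symm
        _ = ⟪P (P u), u⟫_ℂ := by
            rw [show (adjoint R₁) (R₁ u) = (adjoint R₁ * R₁) u from rfl, ← hP2]; rfl
        _ = 0 := by rw [hxy]; simp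
    have h2 : R₁ u = 0 := inner_self_eq_zero.mp h1
    have h3 : u = 0 := hinj (by simpa using h2)
    rwa [sub_eq_zero] at h3
  -- killer: `A * P = 0 → A = 0`
  have killer : ∀ A : H →L[ℂ] H, A * P = 0 → A = 0 := fun A hA =>
    aux_eq_zero_of_mul_eq_zero hPsa hPinj hA
  -- `R₁` commutes with `P`
  have hR₁P : Commute R₁ P := by
    apply aux_commute_of_commute_sq hP
    rw [Commute, SemiconjBy, hP2]
    exact hq
  have part1 : V * P = P * V := by
    have h1 : (V * P - P * V) * P = 0 := by
      have h2 : (V * P) * P = P * (V * P) := by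
        rw [← hpolar]; exact hR₁P.eq
      calc (V * P - P * V) * P = (V * P) * P - (P * V) * P := by rw [sub_mul]
        _ = P * (V * P) - P * (V * P) := by rw [h2, mul_assoc]
        _ = 0 := sub_self _
    have := killer _ h1
    rwa [sub_eq_zero] at this
  refine ⟨part1, ?_⟩
  -- Fuglede: `R₂` commutes with `adjoint R₁`
  have hN : Commute (star R₂) R₂ := by
    rw [Commute, SemiconjBy, star_eq_adjoint]
    exact hn₂.symm
  have hfug : R₁ * star R₂ = star R₂ * R₁ := aux_fuglede hN hc
  have hadj : R₂ * adjoint R₁ = adjoint R₁ * R₂ := by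
    have := congrArg star hfug
    simpa [star_eq_adjoint, adjoint_adjoint, star_mul] using this
  have hR₂sq : Commute R₂ (P * P) := by
    rw [Commute, SemiconjBy, hP2]
    calc R₂ * (adjoint R₁ * R₁) = (R₂ * adjoint R₁) * R₁ := by rw [mul_assoc]
      _ = (adjoint R₁ * R₂) * R₁ := by rw [hadj]
      _ = adjoint R₁ * (R₂ * R₁) := by rw [mul_assoc]
      _ = adjoint R₁ * (R₁ * R₂) := by rw [← hc]
      _ = (adjoint R₁ * R₁) * R₂ := by rw [mul_assoc]
  have hR₂P : Commute R₂ P := aux_commute_of_commute_sq hP hR₂sq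
  have h1 : (V * R₂ - R₂ * V) * P = 0 := by
    have h2 : V * (R₂ * P) = R₂ * (V * P) := by
      rw [hR₂P.eq, ← mul_assoc, ← hpolar, hc, hpolar]
    calc (V * R₂ - R₂ * V) * P = (V * R₂) * P - (R₂ * V) * P := by rw [sub_mul]
      _ = V * (R₂ * P) - (R₂ * V) * P := by rw [mul_assoc]
      _ = R₂ * (V * P) - R₂ * (V * P) := by rw [h2, mul_assoc]
      _ = 0 := sub_self _
  have := killer _ h1
  rwa [sub_eq_zero] at this
end

section
/- Let 𝒫 = {(a₂₁, tr A, det A) ∈ ℂ³ : A = [aᵢⱼ] is a 2×2 complex matrix with operator norm ‖A‖ < 1} (the pentablock). Then for all z, w ∈ ℂ with |z| < 1 and |w| < 1, the point (z, 0, w) belongs to 𝒫; that is, {(z, 0, w) : (z,w) ∈ 𝔻²} ⊆ 𝒫. -/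
open Matrix ComplexConjugate
open scoped Matrix.Norms.L2Operator

namespace Matrix

variable {𝕜 : Type*} [RCLike 𝕜]

def tracelessReflection (s : ℝ) (ζ : 𝕜) : Matrix (Fin 2) (Fin 2) 𝕜 :=
  !![(s : 𝕜), conj ζ; ζ, -(s : 𝕜)]

section

variable (s : ℝ) (ζ : 𝕜)

@[simp]
lemma tracelessReflection_one_zero : tracelessReflection s ζ 1 0 = ζ := rfl

lemma trace_tracelessReflection : (tracelessReflection s ζ).trace = 0 := by
  simp [tracelessReflection, trace_fin_two]

lemma isSelfAdjoint_tracelessReflection : IsSelfAdjoint (tracelessReflection s ζ) := by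
  ext i j
  fin_cases i <;> fin_cases j <;> simp [tracelessReflection]

variable {s ζ} (h : s ^ 2 + ‖ζ‖ ^ 2 = 1)
include h

lemma tracelessReflection_mul_self : tracelessReflection s ζ * tracelessReflection s ζ = 1 := by
  have h' : (s : 𝕜) * s + (‖ζ‖ : 𝕜) ^ 2 = 1 := by exact_mod_cast (by linear_combination h)
  rw [tracelessReflection, mul_fin_two, one_fin_two]
  ext i j
  fin_cases i <;> fin_cases j <;> simp [RCLike.mul_conj, mul_comm] <;> linear_combination h'

lemma tracelessReflection_mem_unitary :
    tracelessReflection s ζ ∈ unitary (Matrix (Fin 2) (Fin 2) 𝕜) := by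
  rw [Unitary.mem_iff, (isSelfAdjoint_tracelessReflection s ζ).star_eq,
    tracelessReflection_mul_self h]
  exact ⟨rfl, rfl⟩

lemma det_tracelessReflection : (tracelessReflection s ζ).det = -1 := by
  have h' : (s : 𝕜) * s + (‖ζ‖ : 𝕜) ^ 2 = 1 := by exact_mod_cast (by linear_combination h)
  simp [tracelessReflection, det_fin_two, RCLike.conj_mul]
  linear_combination -h'

end

end Matrix

lemma mem_pentablock_of_norm_lt_norm {z w : ℂ} (hz : ‖z‖ < 1) (hwz : ‖w‖ < ‖z‖) :
    (z, 0, w) ∈ pentablock := by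
  have hz0 : z ≠ 0 := norm_pos_iff.mp ((norm_nonneg w).trans_lt hwz)
  have hσ : tracelessReflection 0 (1 : ℂ) ∈ unitary _ := tracelessReflection_mem_unitary (by simp)
  set A := diagonal ![-w / z, z] * tracelessReflection 0 (1 : ℂ)
  have hA : ‖A‖ < 1 := by
    rw [CStarRing.norm_mul_mem_unitary _ hσ, l2_opNorm_diagonal, pi_norm_lt_iff one_pos,
      Fin.forall_fin_two]
    refine ⟨?_, hz⟩
    simpa [norm_div, div_lt_one (norm_pos_iff.mpr hz0)] using hwz
  have hA10 : A 1 0 = z := by simp [A]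
  have htr : A.trace = 0 := by simp [A, trace_fin_two, tracelessReflection]
  have hdet : A.det = w := by
    rw [det_mul, det_tracelessReflection (by simp)]
    simp [hz0]
  exact ⟨A, hA, by rw [hA10, htr, hdet]⟩

lemma mem_pentablock_of_norm_sq_le_norm {z w : ℂ} (hw : ‖w‖ < 1) (hzw : ‖z‖ ^ 2 ≤ ‖w‖) :
    (z, 0, w) ∈ pentablock := by
  obtain ⟨μ, hμ⟩ : ∃ μ : ℂ, μ ^ 2 = -w := IsAlgClosed.exists_pow_nat_eq _ two_pos
  have hμw : ‖μ‖ ^ 2 = ‖w‖ := by rw [← norm_pow, hμ, norm_neg]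
  set ζ := z / μ
  have hz : μ * ζ = z := by
    rcases eq_or_ne μ 0 with rfl | hμ0
    · simpa [← hμw, eq_comm] using hzw
    · exact mul_div_cancel₀ z hμ0
  have hs : √(1 - ‖ζ‖ ^ 2) ^ 2 + ‖ζ‖ ^ 2 = 1 := by
    have hζ : ‖ζ‖ ^ 2 ≤ 1 := by
      rw [norm_div, div_pow, hμw]
      exact div_le_one_of_le₀ hzw (norm_nonneg w)
    rw [Real.sq_sqrt (by linarith)]
    ring
  set A := μ • tracelessReflection √(1 - ‖ζ‖ ^ 2) ζ
  have hA : ‖A‖ < 1 := by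
    rw [norm_smul, CStarRing.norm_of_mem_unitary (tracelessReflection_mem_unitary hs), mul_one]
    exact (pow_lt_one_iff_of_nonneg (norm_nonneg μ) two_ne_zero).mp (hμw ▸ hw)
  have hA10 : A 1 0 = z := by simp [A, hz]
  have htr : A.trace = 0 := by simp [A, trace_tracelessReflection]
  have hdet : A.det = w := by
    rw [det_smul, det_tracelessReflection hs, Fintype.card_fin, hμ]
    ring
  exact ⟨A, hA, by rw [hA10, htr, hdet]⟩

/-- For all `z, w` in the open unit disc, the point `(z, 0, w)` belongs to the pentablock. -/
theorem statement16 : ∀ z w : ℂ, ‖z‖ < 1 → ‖w‖ < 1 →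
    (z, 0, w) ∈ pentablock := by
  intro z w hz hw
  rcases lt_or_ge ‖w‖ ‖z‖ with hwz | hzw
  · exact mem_pentablock_of_norm_lt_norm hz hwz
  · exact mem_pentablock_of_norm_sq_le_norm hw (by nlinarith [norm_nonneg z])
end
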